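/- Let S(ℂ[∂]⊗g) carry the PVA λ-bracket determined by {a_λ b} = [a,b] + λk(a,b) for a,b ∈ g (extended by sesquilinearity and Leibniz rules), and let J ⊂ S(ℂ[∂]⊗g) be the differential algebra ideal generated by {m − (f,m) : m ∈ 𝔪}. Then the λ-adjoint action of n defined by (ad_λ n)(a+J) = {n_λ a} + J[λ] is well defined on S(ℂ[∂]⊗g)/J, and on the invariant subspace W₂(g,k,f) := (S(ℂ[∂]⊗g)/J)^{ad_λ n} both the multiplication (a+J)·(b+J) = ab+J and the Poisson λ-bracket {a+J _λ b+J} = {a_λ b} + J[λ] are well defined. -/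

import Mathlib

/-!
STATEMENT 1.  Let `S(ℂ[∂]⊗g)` carry the PVA `λ`-bracket determined by
`{a_λ b} = [a,b] + λ k (a,b)` for `a, b ∈ g`, and let `J` be the differential algebra
ideal generated by `{m − (f,m) : m ∈ 𝔪}`.  Then the `λ`-adjoint action of `n`,
`(ad_λ n)(a+J) = {n_λ a} + J[λ]`, is well defined on `S(ℂ[∂]⊗g)/J`, and on the invariant
subspace `W₂(g,k,f) = (S(ℂ[∂]⊗g)/J)^{ad_λ n}` the multiplication and the Poisson
`λ`-bracket are well defined.

We model `S(ℂ[∂]⊗g)` as an abstract differential commutative `ℂ`-algebra `V` with a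
`λ`-bracket (values in `V[λ] = Polynomial V`) satisfying the PVA axioms, together with an
embedding `emb : g →ₗ[ℂ] V` of the generators on which the bracket takes the prescribed
values.  `g(i)` is the `ad(h/2)`-eigenspace, `n = ⊕_{i≥1/2} g(i)`, `𝔪 = ⊕_{i≥1} g(i)`.
Working with representatives, well-definedness of the structure maps on
`W₂ = (V/J)^{ad_λ n}` is expressed coefficientwise modulo `J`.
-/

open Polynomial

noncomputable section

namespace Stmt1

/-- Apply `D` to every coefficient of `p ∈ V[λ]`. -/
def coeffMap {V : Type*} [CommRing V] (D : V → V) (p : Polynomial V) : Polynomial V :=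
  p.sum fun n c => Polynomial.C (D c) * Polynomial.X ^ n

/-- The operator `(λ + ∂)` on `V[λ]`. -/
def shiftOp {V : Type*} [CommRing V] (D : V → V) (q : Polynomial V) : Polynomial V :=
  Polynomial.X * q + coeffMap D q

/-- `{a_{-λ-∂} b}` : substitute `-λ-∂` for `λ` (with `∂` acting on the coefficients). -/
def negShiftEval {V : Type*} [CommRing V] (D : V → V) (p : Polynomial V) : Polynomial V :=
  p.sum fun n c => (fun q => -shiftOp D q)^[n] (Polynomial.C c)

def lamPP {V : Type*} [CommRing V] : Polynomial (Polynomial V) := Polynomial.C Polynomial.X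
def muPP {V : Type*} [CommRing V] : Polynomial (Polynomial V) := Polynomial.X
def embPP {V : Type*} [CommRing V] (c : V) : Polynomial (Polynomial V) :=
  Polynomial.C (Polynomial.C c)

/-- Evaluate `q ∈ V[ν]` at `ν = t` inside `V[λ][μ]`. -/
def evalAtPP {V : Type*} [CommRing V] (q : Polynomial V) (t : Polynomial (Polynomial V)) :
    Polynomial (Polynomial V) :=
  q.sum fun n c => embPP c * t ^ n

/-- Poisson vertex algebra axioms for a differential commutative algebra `(V, D)` with a
`λ`-bracket `br : V → V → V[λ]`.  In the Jacobi identity, `V[λ,μ]` is modelled as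
`Polynomial (Polynomial V)` with `μ` the outer and `λ` the inner variable. -/
structure IsPVA {V : Type*} [CommRing V] [Algebra ℂ V] (D : V → V)
    (br : V → V → Polynomial V) : Prop where
  d_add : ∀ a b, D (a + b) = D a + D b
  d_smul : ∀ (r : ℂ) (a), D (r • a) = r • D a
  d_mul : ∀ a b, D (a * b) = a * D b + D a * b
  add_left : ∀ a b c, br (a + b) c = br a c + br b c
  add_right : ∀ a b c, br a (b + c) = br a b + br a c
  smul_left : ∀ (r : ℂ) a b, br (r • a) b = r • br a b
  smul_right : ∀ (r : ℂ) a b, br a (r • b) = r • br a b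
  sesq_left : ∀ a b, br (D a) b = -(Polynomial.X * br a b)
  sesq_right : ∀ a b, br a (D b) = shiftOp D (br a b)
  skew : ∀ a b, br b a = -negShiftEval D (br a b)
  jacobi : ∀ a b c,
    ((br b c).sum fun n x => Polynomial.C (br a x) * Polynomial.X ^ n) =
      ((br a c).sum fun m x => (br b x).sum fun n y =>
        (Polynomial.X : Polynomial (Polynomial V)) ^ n *
          Polynomial.C ((Polynomial.X : Polynomial V) ^ m * Polynomial.C y)) +
      ((br a b).sum fun n x => lamPP ^ n * evalAtPP (br x c) (lamPP + muPP))
  leibniz : ∀ a b c, br a (b * c) = Polynomial.C b * br a c + br a b * Polynomial.C c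

/-- `g(i)`, the `ad(h/2)`-eigenspace of eigenvalue `i` (i.e. the `ad h`-eigenspace of
eigenvalue `2 i`). -/
def gsp (g : Type*) [LieRing g] [LieAlgebra ℂ g] (h : g) (i : ℚ) : Submodule ℂ g :=
  Module.End.eigenspace (LieAlgebra.ad ℂ g h) ((2 * i : ℚ) : ℂ)

/-- `n = ⊕_{i ≥ 1/2} g(i)`. -/
def nilp (g : Type*) [LieRing g] [LieAlgebra ℂ g] (h : g) : Submodule ℂ g :=
  ⨆ (i : ℚ) (_ : (1:ℚ)/2 ≤ i), gsp g h i

/-- `𝔪 = ⊕_{i ≥ 1} g(i)`. -/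
def mmp (g : Type*) [LieRing g] [LieAlgebra ℂ g] (h : g) : Submodule ℂ g :=
  ⨆ (i : ℚ) (_ : (1:ℚ) ≤ i), gsp g h i

/-- The differential algebra ideal generated by a set: the ideal generated by all
`∂`-derivatives of its elements. -/
def diffIdealGen {V : Type*} [CommRing V] (D : V → V) (s : Set V) : Ideal V :=
  Ideal.span {v | ∃ x ∈ s, ∃ n : ℕ, v = D^[n] x}

/-!
Everything reduces to brackets with the generators `m - (f, m)` of `J`. For `x ∈ n`,
`{x_λ m - (f, m)} = [x, m] - (f, [x, m])` is again a generator, because the grading forces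
`(x, m) = 0` and `(f, [x, m]) = 0`; by sesquilinearity and the Leibniz rule, `{x_λ J} ⊆ J[λ]`.
For an `ad_λ n`-invariant `a`, skewsymmetry turns `{a_λ m}` into `-{m_{-λ-∂} a}`, which lies in
`J[λ]` because `𝔪 ⊆ n`; hence `{a_λ J} ⊆ J[λ]` as well. The Leibniz rule then makes the
invariants a subalgebra, and the Jacobi identity for `{x_λ {a_μ b}}` shows that the coefficients
of `{a_μ b}` are invariant modulo `J`.
-/
section CoefficientIdeal

variable {V : Type*} [CommRing V] {J : Ideal V} {D : V → V}

lemma sum_mem_ideal {R S : Type*} [Semiring R] [Semiring S] {I : Ideal S} {p : R[X]}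
    {F : ℕ → R → S} (hF : ∀ n, F n (p.coeff n) ∈ I) : p.sum F ∈ I :=
  Ideal.sum_mem _ fun n _ => hF n

lemma coeff_sum_C_mul_X_pow {W : Type*} [Semiring W] (p : V[X]) {F : V → W} (hF : F 0 = 0)
    (i : ℕ) : (p.sum fun n x => C (F x) * X ^ n).coeff i = F (p.coeff i) := by
  simp only [Polynomial.sum_def, finsetSum_coeff, coeff_C_mul, coeff_X_pow, mul_ite, mul_one,
    mul_zero, Finset.sum_ite_eq]
  split_ifs with hi
  · rfl
  · rw [notMem_support_iff.mp hi, hF]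

variable (hD : ∀ v ∈ J, D v ∈ J)
include hD

lemma coeffMap_mem_map_C {p : V[X]} (hp : p ∈ J.map C) : coeffMap D p ∈ J.map C :=
  sum_mem_ideal fun n =>
    Ideal.mul_mem_right _ _ (Ideal.mem_map_of_mem C (hD _ (Ideal.mem_map_C_iff.1 hp n)))

lemma shiftOp_mem_map_C {p : V[X]} (hp : p ∈ J.map C) : shiftOp D p ∈ J.map C :=
  add_mem (Ideal.mul_mem_left _ _ hp) (coeffMap_mem_map_C hD hp)

lemma negShiftEval_mem_map_C {p : V[X]} (hp : p ∈ J.map C) : negShiftEval D p ∈ J.map C :=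
  sum_mem_ideal fun n => Function.Iterate.rec (· ∈ J.map C)
    (Ideal.mem_map_of_mem C (Ideal.mem_map_C_iff.1 hp n))
    (fun _ hq => neg_mem (shiftOp_mem_map_C hD hq)) n

end CoefficientIdeal

namespace IsPVA

variable {V : Type*} [CommRing V] [Algebra ℂ V] {D : V → V} {br : V → V → V[X]}
  (hP : IsPVA D br)
include hP

lemma D_zero : D 0 = 0 := map_zero (AddMonoidHom.mk' D hP.d_add)

lemma br_zero_right (a : V) : br a 0 = 0 := map_zero (AddMonoidHom.mk' (br a) (hP.add_right a))

lemma br_sub_right (a b c : V) : br a (b - c) = br a b - br a c :=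
  map_sub (AddMonoidHom.mk' (br a) (hP.add_right a)) b c

lemma br_sub_left (a b c : V) : br (a - b) c = br a c - br b c :=
  map_sub (AddMonoidHom.mk' (br · c) fun a b => hP.add_left a b c) a b

lemma br_one_right (a : V) : br a 1 = 0 := by
  have h := hP.leibniz a 1 1
  rwa [mul_one, C_1, one_mul, mul_one, left_eq_add] at h

lemma br_algebraMap_right (a : V) (r : ℂ) : br a (algebraMap ℂ V r) = 0 := by
  rw [Algebra.algebraMap_eq_smul_one, hP.smul_right, hP.br_one_right, smul_zero]

lemma D_mem_diffIdealGen {s : Set V} {v : V} (hv : v ∈ diffIdealGen D s) :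
    D v ∈ diffIdealGen D s := by
  induction hv using Submodule.span_induction with
  | mem x hx =>
    obtain ⟨y, hy, n, rfl⟩ := hx
    exact Ideal.subset_span ⟨y, hy, n + 1, (Function.iterate_succ_apply' D n y).symm⟩
  | zero => rw [hP.D_zero]; exact zero_mem _
  | add x y _ _ hx hy => rw [hP.d_add]; exact add_mem hx hy
  | smul c x hxJ hx =>
    rw [smul_eq_mul, hP.d_mul]
    exact add_mem (Ideal.mul_mem_left _ _ hx) (Ideal.mul_mem_left _ _ hxJ)

lemma br_mem_map_C_of_mem_diffIdealGen {s : Set V} {a : V}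
    (hs : ∀ x ∈ s, br a x ∈ (diffIdealGen D s).map C) {v : V} (hv : v ∈ diffIdealGen D s) :
    br a v ∈ (diffIdealGen D s).map C := by
  induction hv using Submodule.span_induction with
  | mem x hx =>
    obtain ⟨y, hy, n, rfl⟩ := hx
    induction n with
    | zero => exact hs y hy
    | succ n ih =>
      rw [Function.iterate_succ_apply', hP.sesq_right]
      exact shiftOp_mem_map_C (fun _ => hP.D_mem_diffIdealGen) ih
  | zero => rw [hP.br_zero_right]; exact zero_mem _
  | add x y _ _ hx hy => rw [hP.add_right]; exact add_mem hx hy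
  | smul c x hxJ hx =>
    rw [smul_eq_mul, hP.leibniz]
    exact add_mem (Ideal.mul_mem_left _ _ hx)
      (Ideal.mul_mem_left _ _ (Ideal.mem_map_of_mem C hxJ))

variable {J : Ideal V} (hD : ∀ v ∈ J, D v ∈ J)
include hD

lemma br_mem_map_C_of_mem_left {b x : V} (hb : ∀ v ∈ J, br b v ∈ J.map C) (hx : x ∈ J) :
    br x b ∈ J.map C := by
  rw [hP.skew b x]
  exact neg_mem (negShiftEval_mem_map_C hD (hb x hx))

lemma br_sub_br_mem_map_C {a a' b b' : V} (ha : ∀ v ∈ J, br a v ∈ J.map C)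
    (hb' : ∀ v ∈ J, br b' v ∈ J.map C) (haa' : a - a' ∈ J) (hbb' : b - b' ∈ J) :
    br a b - br a' b' ∈ J.map C := by
  have hsplit : br a b - br a' b' = br a (b - b') + br (a - a') b' := by
    rw [hP.br_sub_right, hP.br_sub_left]
    ring
  rw [hsplit]
  exact add_mem (ha _ hbb') (hP.br_mem_map_C_of_mem_left hD hb' haa')

lemma br_br_coeff_mem_map_C {a b c : V} (hab : br a b ∈ J.map C) (hac : br a c ∈ J.map C)
    (hb : ∀ v ∈ J, br b v ∈ J.map C) (hc : ∀ v ∈ J, br c v ∈ J.map C) (i : ℕ) :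
    br a ((br b c).coeff i) ∈ J.map C := by
  have hjacobi : ((br b c).sum fun n x => C (br a x) * X ^ n) ∈ (J.map C).map C := by
    rw [hP.jacobi a b c]
    refine add_mem (sum_mem_ideal fun m => sum_mem_ideal fun n => ?_)
      (sum_mem_ideal fun n => Ideal.mul_mem_left _ _ (sum_mem_ideal fun m => ?_))
    · have hy := Ideal.mem_map_C_iff.1 (hb _ (Ideal.mem_map_C_iff.1 hac m)) n
      exact Ideal.mul_mem_left _ _
        (Ideal.mem_map_of_mem C (Ideal.mul_mem_left _ _ (Ideal.mem_map_of_mem C hy)))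
    · have hx := hP.br_mem_map_C_of_mem_left hD hc (Ideal.mem_map_C_iff.1 hab n)
      have hy := Ideal.mem_map_C_iff.1 hx m
      exact Ideal.mul_mem_right _ _ (Ideal.mem_map_of_mem C (Ideal.mem_map_of_mem C hy))
  simpa only [coeff_sum_C_mul_X_pow _ (hP.br_zero_right a)] using Ideal.mem_map_C_iff.1 hjacobi i

end IsPVA

section Invariants

variable {V : Type*} [CommRing V] [Algebra ℂ V] {D : V → V} {br : V → V → V[X]}
  {J : Ideal V} {N : Set V} {a b : V}

def IsAdInvariant (br : V → V → V[X]) (J : Ideal V) (N : Set V) (a : V) : Prop :=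
  ∀ n ∈ N, br n a ∈ J.map C

lemma isAdInvariant_one (hP : IsPVA D br) : IsAdInvariant br J N 1 := fun n _ => by
  rw [hP.br_one_right]
  exact zero_mem _

namespace IsAdInvariant

variable (hP : IsPVA D br)
include hP

lemma of_sub_mem (hN : ∀ n ∈ N, ∀ v ∈ J, br n v ∈ J.map C) (ha : IsAdInvariant br J N a)
    (hab : a - b ∈ J) : IsAdInvariant br J N b := fun n hn => by
  simpa only [← hP.br_sub_right, sub_sub_cancel] using sub_mem (ha n hn) (hN n hn _ hab)

lemma add (ha : IsAdInvariant br J N a) (hb : IsAdInvariant br J N b) :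
    IsAdInvariant br J N (a + b) := fun n hn => by
  rw [hP.add_right]
  exact add_mem (ha n hn) (hb n hn)

lemma mul (ha : IsAdInvariant br J N a) (hb : IsAdInvariant br J N b) :
    IsAdInvariant br J N (a * b) := fun n hn => by
  rw [hP.leibniz]
  exact add_mem (Ideal.mul_mem_left _ _ (hb n hn)) (Ideal.mul_mem_right _ _ (ha n hn))

lemma coeff_br (hD : ∀ v ∈ J, D v ∈ J)
    (hinv : ∀ x, IsAdInvariant br J N x → ∀ v ∈ J, br x v ∈ J.map C)
    (ha : IsAdInvariant br J N a) (hb : IsAdInvariant br J N b) (i : ℕ) :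
    IsAdInvariant br J N ((br a b).coeff i) := fun n hn =>
  hP.br_br_coeff_mem_map_C hD (ha n hn) (hb n hn) (hinv a ha) (hinv b hb) i

end IsAdInvariant

end Invariants

lemma Submodule.apply_mem_of_mem_biSup {R M N P ι κ : Type*} [CommSemiring R] [AddCommMonoid M]
    [AddCommMonoid N] [AddCommMonoid P] [Module R M] [Module R N] [Module R P]
    (φ : M →ₗ[R] N →ₗ[R] P) {S : ι → Prop} {T : κ → Prop} {p : ι → Submodule R M}
    {q : κ → Submodule R N} {r : Submodule R P}
    (h : ∀ i, S i → ∀ j, T j → ∀ x ∈ p i, ∀ y ∈ q j, φ x y ∈ r) {x : M} {y : N}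
    (hx : x ∈ ⨆ (i) (_ : S i), p i) (hy : y ∈ ⨆ (j) (_ : T j), q j) : φ x y ∈ r := by
  refine Submodule.map₂_le.1 ?_ x hx y hy
  simp only [Submodule.map₂_iSup_left, Submodule.map₂_iSup_right, iSup_le_iff,
    Submodule.map₂_le]
  exact fun j hj i hi => h i hi j hj

section Grading

variable {g : Type*} [LieRing g] [LieAlgebra ℂ g] {h : g}

/-- `g(≥ c) = ⊕_{i ≥ c} g(i)`, so that `n = g(≥ 1/2)` and `𝔪 = g(≥ 1)`. -/
def gspGE (g : Type*) [LieRing g] [LieAlgebra ℂ g] (h : g) (c : ℚ) : Submodule ℂ g :=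
  ⨆ (i : ℚ) (_ : c ≤ i), gsp g h i

lemma mem_gsp {i : ℚ} {x : g} : x ∈ gsp g h i ↔ ⁅h, x⁆ = ((2 * i : ℚ) : ℂ) • x := by
  rw [gsp, Module.End.mem_eigenspace_iff, LieAlgebra.ad_apply]

lemma gsp_le_gspGE {c i : ℚ} (hci : c ≤ i) : gsp g h i ≤ gspGE g h c :=
  le_iSup₂ (f := fun (i : ℚ) (_ : c ≤ i) => gsp g h i) i hci

lemma gspGE_antitone : Antitone (gspGE g h) := fun _ _ hcd => biSup_mono fun _ hi => hcd.trans hi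

lemma lie_mem_gsp {i j : ℚ} {x y : g} (hx : x ∈ gsp g h i) (hy : y ∈ gsp g h j) :
    ⁅x, y⁆ ∈ gsp g h (i + j) := by
  rw [mem_gsp] at hx hy ⊢
  rw [leibniz_lie, hx, hy, smul_lie, lie_smul, ← add_smul]
  push_cast
  ring_nf

lemma lie_mem_gspGE {c d : ℚ} {x y : g} (hx : x ∈ gspGE g h c) (hy : y ∈ gspGE g h d) :
    ⁅x, y⁆ ∈ gspGE g h (c + d) :=
  Submodule.apply_mem_of_mem_biSup (LieModule.toEnd ℂ g g : g →ₗ[ℂ] Module.End ℂ g)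
    (fun _ hi _ hj _ hx _ hy => gsp_le_gspGE (add_le_add hi hj) (lie_mem_gsp hx hy)) hx hy

lemma lie_mem_mmp {x m : g} (hx : x ∈ nilp g h) (hm : m ∈ mmp g h) : ⁅x, m⁆ ∈ mmp g h :=
  gspGE_antitone (by norm_num) (lie_mem_gspGE (c := 1 / 2) (d := 1) hx hm)

lemma mmp_le_nilp : mmp g h ≤ nilp g h := gspGE_antitone (by norm_num)

variable {B : g →ₗ[ℂ] g →ₗ[ℂ] ℂ} (hBsymm : ∀ a b, B a b = B b a)
  (hBinv : ∀ a b c, B ⁅a, b⁆ c = B a ⁅b, c⁆)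
include hBsymm hBinv

/-- Invariance gives `(2i + 2j) (x, y) = ([h, x], y) + (x, [h, y]) = 0`. -/
lemma B_eq_zero_of_mem_gsp {i j : ℚ} {x y : g} (hx : x ∈ gsp g h i) (hy : y ∈ gsp g h j)
    (hij : i + j ≠ 0) : B x y = 0 := by
  have hinv : B ⁅h, x⁆ y + B x ⁅h, y⁆ = 0 := by
    rw [hBinv h x y, ← lie_skew h y, map_neg, ← hBinv x y h, hBsymm ⁅x, y⁆, add_neg_cancel]
  rw [mem_gsp] at hx hy
  rw [hx, hy, map_smul, LinearMap.smul_apply, map_smul, smul_eq_mul, smul_eq_mul, ← add_mul]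
    at hinv
  refine (mul_eq_zero.1 hinv).resolve_left ?_
  exact_mod_cast (by contrapose! hij; linarith : (2 * i + 2 * j : ℚ) ≠ 0)

lemma B_eq_zero_of_mem_gspGE {c d : ℚ} {x y : g} (hx : x ∈ gspGE g h c) (hy : y ∈ gspGE g h d)
    (hcd : 0 < c + d) : B x y = 0 :=
  (Submodule.mem_bot ℂ).1 <| Submodule.apply_mem_of_mem_biSup B
    (fun _ hi _ hj _ hx _ hy => (Submodule.mem_bot ℂ).2 <|
      B_eq_zero_of_mem_gsp hBsymm hBinv hx hy (by linarith)) hx hy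

end Grading

lemma br_emb_sub_algebraMap {g : Type*} [LieRing g] [LieAlgebra ℂ g] {h : g} {V : Type*}
    [CommRing V] [Algebra ℂ V] {D : V → V} {br : V → V → V[X]} (hP : IsPVA D br)
    {emb : g →ₗ[ℂ] V} {B : g →ₗ[ℂ] g →ₗ[ℂ] ℂ} {k : ℂ}
    (hbr_gen : ∀ a b : g, br (emb a) (emb b) = C (emb ⁅a, b⁆) + (k * B a b) • (X : V[X]))
    (hBsymm : ∀ a b, B a b = B b a) (hBinv : ∀ a b c, B ⁅a, b⁆ c = B a ⁅b, c⁆) {f : g}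
    (hf : f ∈ gspGE g h (-1)) {x m : g} (hx : x ∈ nilp g h) (hm : m ∈ mmp g h) :
    br (emb x) (emb m - algebraMap ℂ V (B f m)) =
      C (emb ⁅x, m⁆ - algebraMap ℂ V (B f ⁅x, m⁆)) := by
  have hxm : B x m = 0 := B_eq_zero_of_mem_gspGE hBsymm hBinv (c := 1 / 2) (d := 1) hx hm
    (by norm_num)
  have hfxm : B f ⁅x, m⁆ = 0 := B_eq_zero_of_mem_gspGE hBsymm hBinv (c := -1) (d := 1 / 2 + 1)
    hf (lie_mem_gspGE (c := 1 / 2) (d := 1) hx hm) (by norm_num)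
  rw [hP.br_sub_right, hP.br_algebraMap_right, sub_zero, hbr_gen, hxm, hfxm, mul_zero,
    zero_smul, add_zero, map_zero, sub_zero]

theorem statement1_general
    -- a finite-dimensional simple Lie algebra with an sl₂-triple (e,h,f) and a
    -- normalized invariant symmetric bilinear form
    (g : Type*) [LieRing g] [LieAlgebra ℂ g]
    (h f : g) (B : g →ₗ[ℂ] g →ₗ[ℂ] ℂ)
    (hhf : ⁅h, f⁆ = (-2:ℂ) • f)
    (hBsymm : ∀ a b, B a b = B b a) (hBinv : ∀ a b c, B ⁅a, b⁆ c = B a ⁅b, c⁆)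
    (k : ℂ)
    -- V = S(ℂ[∂]⊗g), an algebra of differential polynomials generated by g
    (V : Type*) [CommRing V] [Algebra ℂ V] (D : V → V)
    (br : V → V → Polynomial V)
    (hPVA : IsPVA D br)
    (emb : g →ₗ[ℂ] V)
    -- the λ-bracket is determined on the generators by {a_λ b} = [a,b] + λ k (a,b)
    (hbr_gen : ∀ a b : g,
      br (emb a) (emb b) = Polynomial.C (emb ⁅a, b⁆) + (k * B a b) • (Polynomial.X : Polynomial V)) :
    -- J = ⟨ m − (f,m) : m ∈ 𝔪 ⟩ (differential algebra ideal)
    ∀ J : Ideal V, J = diffIdealGen D {v | ∃ x ∈ mmp g h, v = emb x - algebraMap ℂ V (B f x)} →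
    -- (1) the λ-adjoint action of n is well defined on V/J: (ad_λ n)(J) ⊆ J[λ]
    ((∀ nn ∈ nilp g h, ∀ v ∈ J, ∀ i : ℕ, (br (emb nn) v).coeff i ∈ J) ∧
    -- (2) on W₂ = (V/J)^{ad_λ n}, described by invariant representatives `Inv`,
    -- the multiplication and the λ-bracket are well defined
    (∀ Inv : V → Prop, (∀ a, Inv a ↔ ∀ nn ∈ nilp g h, ∀ i : ℕ, (br (emb nn) a).coeff i ∈ J) →
      -- invariance passes to J-equivalent representatives
      (∀ a b, Inv a → a - b ∈ J → Inv b) ∧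
      -- the product of invariant elements is invariant (well-definedness mod J is
      -- automatic for an ideal), so multiplication is well defined on W₂
      (Inv 1 ∧ (∀ a b, Inv a → Inv b → Inv (a * b)) ∧ (∀ a b, Inv a → Inv b → Inv (a + b))) ∧
      -- the λ-bracket descends: its coefficients are invariant mod J and do not depend on
      -- the choice of representatives
      ((∀ a b, Inv a → Inv b → ∀ i : ℕ, Inv ((br a b).coeff i)) ∧
       (∀ a a' b b', Inv a → Inv b → a - a' ∈ J → b - b' ∈ J →
          ∀ i : ℕ, (br a b).coeff i - (br a' b').coeff i ∈ J)))) := by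
  intro J hJ
  have hf : f ∈ gspGE g h (-1) := gsp_le_gspGE le_rfl (by rw [mem_gsp, hhf]; norm_num)
  have hD : ∀ v ∈ J, D v ∈ J := fun v hv => hJ ▸ hPVA.D_mem_diffIdealGen (hJ ▸ hv)
  have hgen : ∀ m ∈ mmp g h, emb m - algebraMap ℂ V (B f m) ∈ J := fun m hm =>
    hJ ▸ Ideal.subset_span ⟨_, ⟨m, hm, rfl⟩, 0, rfl⟩
  set N : Set V := emb '' (nilp g h : Set g)
  have hN : ∀ n ∈ N, ∀ v ∈ J, br n v ∈ J.map C := by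
    rintro _ ⟨x, hx, rfl⟩ v hv
    rw [hJ] at hv ⊢
    refine hPVA.br_mem_map_C_of_mem_diffIdealGen ?_ hv
    rintro _ ⟨m, hm, rfl⟩
    rw [br_emb_sub_algebraMap hPVA hbr_gen hBsymm hBinv hf hx hm, ← hJ]
    exact Ideal.mem_map_of_mem C (hgen _ (lie_mem_mmp hx hm))
  have hinv : ∀ a, IsAdInvariant br J N a → ∀ v ∈ J, br a v ∈ J.map C := by
    intro a ha v hv
    rw [hJ] at hv ⊢
    refine hPVA.br_mem_map_C_of_mem_diffIdealGen ?_ hv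
    rintro _ ⟨m, hm, rfl⟩
    rw [hPVA.br_sub_right, hPVA.br_algebraMap_right, sub_zero, hPVA.skew (emb m) a, ← hJ]
    exact neg_mem (negShiftEval_mem_map_C hD (ha _ ⟨m, mmp_le_nilp hm, rfl⟩))
  refine ⟨fun x hx v hv => Ideal.mem_map_C_iff.1 (hN _ ⟨x, hx, rfl⟩ v hv),
    fun Inv hInv => ?_⟩
  obtain rfl : Inv = IsAdInvariant br J N := funext fun a => propext <| (hInv a).trans <| by
    simp only [IsAdInvariant, N, Set.forall_mem_image, SetLike.mem_coe, Ideal.mem_map_C_iff]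
  refine ⟨fun a b ha => ha.of_sub_mem hPVA hN, ⟨isAdInvariant_one hPVA,
    fun a b ha => ha.mul hPVA, fun a b ha => ha.add hPVA⟩,
    fun a b ha hb => ha.coeff_br hPVA hD hinv hb, fun a a' b b' ha hb haa' hbb' i => ?_⟩
  rw [← coeff_sub]
  exact Ideal.mem_map_C_iff.1 (hPVA.br_sub_br_mem_map_C hD (hinv a ha)
    (hinv b' (hb.of_sub_mem hPVA hN hbb')) haa' hbb') i

theorem statement1
    -- a finite-dimensional simple Lie algebra with an sl₂-triple (e,h,f) and a
    -- normalized invariant symmetric bilinear form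
    (g : Type*) [LieRing g] [LieAlgebra ℂ g] [FiniteDimensional ℂ g] [LieAlgebra.IsSimple ℂ g]
    (e h f : g) (B : g →ₗ[ℂ] g →ₗ[ℂ] ℂ)
    (hhe : ⁅h, e⁆ = (2:ℂ) • e) (hhf : ⁅h, f⁆ = (-2:ℂ) • f) (hef : ⁅e, f⁆ = h)
    (hBsymm : ∀ a b, B a b = B b a) (hBinv : ∀ a b c, B ⁅a, b⁆ c = B a ⁅b, c⁆)
    (hBef : B e f = 1) (hBhh : B h h = 2)
    (k : ℂ)
    -- V = S(ℂ[∂]⊗g), an algebra of differential polynomials generated by g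
    (V : Type*) [CommRing V] [Algebra ℂ V] (D : V → V)
    (br : V → V → Polynomial V)
    (hPVA : IsPVA D br)
    (emb : g →ₗ[ℂ] V)
    -- the λ-bracket is determined on the generators by {a_λ b} = [a,b] + λ k (a,b)
    (hbr_gen : ∀ a b : g,
      br (emb a) (emb b) = Polynomial.C (emb ⁅a, b⁆) + (k * B a b) • (Polynomial.X : Polynomial V))
    -- V is freely generated, as a differential algebra, by (the image of) a basis of g
    (ib : Type*) (bg : Module.Basis ib ℂ g)
    (hfree : AlgebraicIndependent ℂ (fun p : ib × ℕ => D^[p.2] (emb (bg p.1))) ∧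
      Algebra.adjoin ℂ (Set.range fun p : ib × ℕ => D^[p.2] (emb (bg p.1))) = ⊤) :
    -- J = ⟨ m − (f,m) : m ∈ 𝔪 ⟩ (differential algebra ideal)
    ∀ J : Ideal V, J = diffIdealGen D {v | ∃ x ∈ mmp g h, v = emb x - algebraMap ℂ V (B f x)} →
    -- (1) the λ-adjoint action of n is well defined on V/J: (ad_λ n)(J) ⊆ J[λ]
    ((∀ nn ∈ nilp g h, ∀ v ∈ J, ∀ i : ℕ, (br (emb nn) v).coeff i ∈ J) ∧
    -- (2) on W₂ = (V/J)^{ad_λ n}, described by invariant representatives `Inv`,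
    -- the multiplication and the λ-bracket are well defined
    (∀ Inv : V → Prop, (∀ a, Inv a ↔ ∀ nn ∈ nilp g h, ∀ i : ℕ, (br (emb nn) a).coeff i ∈ J) →
      -- invariance passes to J-equivalent representatives
      (∀ a b, Inv a → a - b ∈ J → Inv b) ∧
      -- the product of invariant elements is invariant (well-definedness mod J is
      -- automatic for an ideal), so multiplication is well defined on W₂
      (Inv 1 ∧ (∀ a b, Inv a → Inv b → Inv (a * b)) ∧ (∀ a b, Inv a → Inv b → Inv (a + b))) ∧
      -- the λ-bracket descends: its coefficients are invariant mod J and do not depend on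
      -- the choice of representatives
      ((∀ a b, Inv a → Inv b → ∀ i : ℕ, Inv ((br a b).coeff i)) ∧
       (∀ a a' b b', Inv a → Inv b → a - a' ∈ J → b - b' ∈ J →
          ∀ i : ℕ, (br a b).coeff i - (br a' b').coeff i ∈ J)))) :=
  statement1_general g h f B hhf hBsymm hBinv k V D br hPVA emb hbr_gen

end Stmt1
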